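/- Amortised bisimilarity is cost improving: if Γ ⊨ (M ▹ P) ≲^n (N ▹ Q) and M ▹ P →_l M' ▹ P', then there exist N', Q' and k with N ▹ Q →*_k N' ▹ Q' and Γ ⊨ (M' ▹ P') ≲^{n+k−l} (N' ▹ Q'). -/

import Mathlib

/-! # πcr : a π-calculus with explicit resource management (costed semantics) -/

abbrev Chan := ℕ
abbrev Var := ℕ

inductive Ident : Type
  | ch (c : Chan)
  | var (x : Var)
deriving DecidableEq

/-- Type attributes: unrestricted ω, affine 1, unique-after-i •ᵢ. -/
inductive Attr : Type
  | unr
  | aff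
  | unq (i : ℕ)
deriving DecidableEq

/-- Types: channel types [T⃗]^a, recursive types μX.C (de Bruijn), type
variables, and the process type. -/
inductive Ty : Type
  | chan (args : List Ty) (a : Attr)
  | mu (body : Ty)
  | tvar (n : ℕ)
  | proc

mutual
  /-- Substitute `R` for the de Bruijn type variable `n`. -/
  def Ty.substT (n : ℕ) (R : Ty) : Ty → Ty
    | .chan ts a => .chan (Ty.substTList n R ts) a
    | .mu T => .mu (Ty.substT (n + 1) R T)
    | .tvar m => if m = n then R else .tvar m
    | .proc => .proc
  def Ty.substTList (n : ℕ) (R : Ty) : List Ty → List Ty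
    | [] => []
    | t :: ts => Ty.substT n R t :: Ty.substTList n R ts
end

/-- Equi-recursive type equivalence: least type-congruence satisfying eRec. -/
inductive TyEquiv : Ty → Ty → Prop
  | refl (T) : TyEquiv T T
  | symm : TyEquiv T T' → TyEquiv T' T
  | trans : TyEquiv T T' → TyEquiv T' T'' → TyEquiv T T''
  | unfold (T) : TyEquiv (.mu T) (Ty.substT 0 (.mu T) T)
  | chanCong (ts₁ ts₂ : List Ty) (a : Attr) :
      TyEquiv T T' → TyEquiv (.chan (ts₁ ++ T :: ts₂) a) (.chan (ts₁ ++ T' :: ts₂) a)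
  | muCong : TyEquiv T T' → TyEquiv (.mu T) (.mu T')

/-- Subtyping on attributes: •ᵢ <: •ᵢ₊₁, •ᵢ <: ω, ω <: 1. -/
inductive AttrSub : Attr → Attr → Prop
  | indx (i) : AttrSub (.unq i) (.unq (i + 1))
  | unqUnr (i) : AttrSub (.unq i) .unr
  | unrAff : AttrSub .unr .aff

/-- Subtyping on channel types (same object types). -/
inductive TySub : Ty → Ty → Prop
  | chan (ts) : AttrSub a a' → TySub (.chan ts a) (.chan ts a')

/-- Type splitting T = T₁ ∘ T₂. -/
inductive TySplit : Ty → Ty → Ty → Prop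
  | unr (ts) : TySplit (.chan ts .unr) (.chan ts .unr) (.chan ts .unr)
  | proc : TySplit .proc .proc .proc
  | unq (ts i) : TySplit (.chan ts (.unq i)) (.chan ts .aff) (.chan ts (.unq (i + 1)))

/-- Type environments: multisets of assumptions. -/
abbrev TyEnv := Multiset (Ident × Ty)

def TyEnv.domChans (Γ : TyEnv) : Set Chan := {c | ∃ T, (Ident.ch c, T) ∈ Γ}

def TyEnv.IsPartialMap (Γ : TyEnv) : Prop := (Γ.map Prod.fst).Nodup

/-- The environment structural relation Γ ≺ Γ'. -/
inductive EnvStruct : TyEnv → TyEnv → Prop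
  | refl (Γ) : EnvStruct Γ Γ
  | trans : EnvStruct Γ Γ' → EnvStruct Γ' Γ'' → EnvStruct Γ Γ''
  | con : TySplit T T₁ T₂ → EnvStruct (Γ + {(u, T)}) (Γ + {(u, T₁), (u, T₂)})
  | join : TySplit T T₁ T₂ → EnvStruct (Γ + {(u, T₁), (u, T₂)}) (Γ + {(u, T)})
  | weak (Γ u T) : EnvStruct (Γ + {(u, T)}) Γ
  | tyEq : TyEquiv T₁ T₂ → EnvStruct (Γ + {(u, T₁)}) (Γ + {(u, T₂)})
  | sub : TySub T₁ T₂ → EnvStruct (Γ + {(u, T₁)}) (Γ + {(u, T₂)})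
  | rev (Γ u ts₁ ts₂) :
      EnvStruct (Γ + {(u, Ty.chan ts₁ (.unq 0))}) (Γ + {(u, Ty.chan ts₂ (.unq 0))})

/-- Consistency of a type environment. -/
def TyEnv.Consistent (Γ : TyEnv) : Prop :=
  ∃ Γ' : TyEnv, TyEnv.IsPartialMap Γ' ∧ EnvStruct Γ' Γ

/-- πcr processes. -/
inductive Proc : Type
  | output (u : Ident) (vs : List Ident) (P : Proc)
  | input (u : Ident) (xs : List Var) (P : Proc)
  | nil
  | ifeq (u v : Ident) (P Q : Proc)
  | recur (w : Var) (P : Proc)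
  | pvar (w : Var)
  | par (P Q : Proc)
  | alloc (x : Var) (P : Proc)
  | free (u : Ident) (P : Proc)

def Ident.subst (σ : Var → Option Chan) : Ident → Ident
  | .ch c => .ch c
  | .var x => match σ x with | some d => .ch d | none => .var x

def Ident.rename (σ : Chan → Chan) : Ident → Ident
  | .ch c => .ch (σ c)
  | .var x => .var x

def Ident.vars : Ident → Set Var
  | .ch _ => ∅
  | .var x => {x}

def Ident.chans : Ident → Set Chan
  | .ch c => {c}
  | .var _ => ∅

def removeVars (σ : Var → Option Chan) (xs : List Var) : Var → Option Chan :=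
  fun x => if x ∈ xs then none else σ x

/-- Capture-avoiding substitution of channels for variables. -/
def Proc.subst : (Var → Option Chan) → Proc → Proc
  | σ, .output u vs P => .output (u.subst σ) (vs.map (Ident.subst σ)) (Proc.subst σ P)
  | σ, .input u xs P => .input (u.subst σ) xs (Proc.subst (removeVars σ xs) P)
  | _, .nil => .nil
  | σ, .ifeq u v P Q => .ifeq (u.subst σ) (v.subst σ) (Proc.subst σ P) (Proc.subst σ Q)
  | σ, .recur w P => .recur w (Proc.subst (removeVars σ [w]) P)
  | _, .pvar w => .pvar w
  | σ, .par P Q => .par (Proc.subst σ P) (Proc.subst σ Q)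
  | σ, .alloc x P => .alloc x (Proc.subst (removeVars σ [x]) P)
  | σ, .free u P => .free (u.subst σ) (Proc.subst σ P)

/-- The substitution {d⃗/x⃗}. -/
def substOf (xs : List Var) (ds : List Chan) : Var → Option Chan :=
  fun x => (xs.zip ds).lookup x

/-- Substitution of a process `R` for the process variable `w`. -/
def Proc.substProc (w : Var) (R : Proc) : Proc → Proc
  | .output u vs P => .output u vs (Proc.substProc w R P)
  | .input u xs P => if w ∈ xs then .input u xs P else .input u xs (Proc.substProc w R P)
  | .nil => .nil
  | .ifeq u v P Q => .ifeq u v (Proc.substProc w R P) (Proc.substProc w R Q)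
  | .recur w' P => if w' = w then .recur w' P else .recur w' (Proc.substProc w R P)
  | .pvar w' => if w' = w then R else .pvar w'
  | .par P Q => .par (Proc.substProc w R P) (Proc.substProc w R Q)
  | .alloc x P => if x = w then .alloc x P else .alloc x (Proc.substProc w R P)
  | .free u P => .free u (Proc.substProc w R P)

/-- Renaming of channel names in a process. -/
def Proc.rename (σ : Chan → Chan) : Proc → Proc
  | .output u vs P => .output (u.rename σ) (vs.map (Ident.rename σ)) (Proc.rename σ P)
  | .input u xs P => .input (u.rename σ) xs (Proc.rename σ P)
  | .nil => .nil
  | .ifeq u v P Q => .ifeq (u.rename σ) (v.rename σ) (Proc.rename σ P) (Proc.rename σ Q)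
  | .recur w P => .recur w (Proc.rename σ P)
  | .pvar w => .pvar w
  | .par P Q => .par (Proc.rename σ P) (Proc.rename σ Q)
  | .alloc x P => .alloc x (Proc.rename σ P)
  | .free u P => .free (u.rename σ) (Proc.rename σ P)

def listVars (l : List Ident) : Set Var := {x | ∃ u ∈ l, x ∈ Ident.vars u}

def listChans (l : List Ident) : Set Chan := {c | ∃ u ∈ l, c ∈ Ident.chans u}

/-- Free variables of a process. -/
def Proc.freeVars : Proc → Set Var
  | .output u vs P => u.vars ∪ listVars vs ∪ P.freeVars
  | .input u xs P => u.vars ∪ (P.freeVars \ {x | x ∈ xs})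
  | .nil => ∅
  | .ifeq u v P Q => u.vars ∪ v.vars ∪ P.freeVars ∪ Q.freeVars
  | .recur w P => P.freeVars \ {w}
  | .pvar w => {w}
  | .par P Q => P.freeVars ∪ Q.freeVars
  | .alloc x P => P.freeVars \ {x}
  | .free u P => u.vars ∪ P.freeVars

/-- Channel names occurring in a process. -/
def Proc.chans : Proc → Set Chan
  | .output u vs P => u.chans ∪ listChans vs ∪ P.chans
  | .input u _ P => u.chans ∪ P.chans
  | .nil => ∅
  | .ifeq u v P Q => u.chans ∪ v.chans ∪ P.chans ∪ Q.chans
  | .recur _ P => P.chans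
  | .pvar _ => ∅
  | .par P Q => P.chans ∪ Q.chans
  | .alloc _ P => P.chans
  | .free u P => u.chans ∪ P.chans

def Proc.Closed (P : Proc) : Prop := P.freeVars = ∅

/-- Structural equivalence: least congruence for parallel composition with
commutativity, associativity and nil. -/
inductive StructEq : Proc → Proc → Prop
  | refl (P) : StructEq P P
  | symm : StructEq P Q → StructEq Q P
  | trans : StructEq P Q → StructEq Q R → StructEq P R
  | comm (P Q) : StructEq (.par P Q) (.par Q P)
  | assoc (P Q R) : StructEq (.par P (.par Q R)) (.par (.par P Q) R)
  | nil (P) : StructEq (.par P .nil) P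
  | parCong : StructEq P P' → StructEq Q Q' → StructEq (.par P Q) (.par P' Q')

/-- A system: a resource environment (finite set of allocated channels)
together with a process. -/
structure System : Type where
  res : Finset Chan
  proc : Proc

def System.rename (S : System) (σ : Chan → Chan) : System :=
  ⟨S.res.image σ, S.proc.rename σ⟩

def TyEnv.rename (Γ : TyEnv) (σ : Chan → Chan) : TyEnv :=
  Γ.map (fun p => (Ident.rename σ p.1, p.2))

/-- Environments consisting only of unrestricted assumptions. -/
def TyEnv.Unrestricted (Γ : TyEnv) : Prop :=
  ∀ p ∈ Γ, (∃ ts, p.2 = Ty.chan ts .unr) ∨ p.2 = Ty.proc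

/-- The assumptions left from `u : [ts]^a` after one use: the `a − 1`
operation.  Undefined (none) for unique-now. -/
def predEnv (u : Ident) (ts : List Ty) : Attr → Option TyEnv
  | .aff => some 0
  | .unr => some {(u, Ty.chan ts .unr)}
  | .unq 0 => none
  | .unq (i + 1) => some {(u, Ty.chan ts (.unq i))}

/-- The substructural typing judgement Γ ⊢ P. -/
inductive HasTy : TyEnv → Proc → Prop
  | out {Γ Δ : TyEnv} {u : Ident} {ts : List Ty} {a : Attr} {vs : List Ident} {P : Proc} :
      predEnv u ts a = some Δ → vs.length = ts.length →
      HasTy (Γ + Δ) P →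
      HasTy (Γ + {(u, Ty.chan ts a)} + Multiset.ofList (vs.zip ts)) (.output u vs P)
  | inp {Γ Δ : TyEnv} {u : Ident} {ts : List Ty} {a : Attr} {xs : List Var} {P : Proc} :
      predEnv u ts a = some Δ → xs.length = ts.length →
      HasTy (Γ + Δ + Multiset.ofList ((xs.map Ident.var).zip ts)) P →
      HasTy (Γ + {(u, Ty.chan ts a)}) (.input u xs P)
  | par : HasTy Γ₁ P → HasTy Γ₂ Q → HasTy (Γ₁ + Γ₂) (.par P Q)
  | ifeq : (∃ T, (u, T) ∈ Γ) → (∃ T, (v, T) ∈ Γ) →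
      HasTy Γ P → HasTy Γ Q → HasTy Γ (.ifeq u v P Q)
  | recur : TyEnv.Unrestricted Γ → HasTy (Γ + {(Ident.var w, Ty.proc)}) P →
      HasTy Γ (.recur w P)
  | pvar (w) : HasTy {(Ident.var w, Ty.proc)} (.pvar w)
  | free : HasTy Γ P → HasTy (Γ + {(u, Ty.chan ts (.unq 0))}) (.free u P)
  | alloc : HasTy (Γ + {(Ident.var x, Ty.chan ts (.unq 0))}) P → HasTy Γ (.alloc x P)
  | nil : HasTy 0 .nil
  | str : HasTy Γ' P → EnvStruct Γ Γ' → HasTy Γ P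

/-- Configurations Γ ◃ M ▹ P. -/
def IsConfig (Γ : TyEnv) (S : System) : Prop :=
  S.proc.Closed ∧ TyEnv.domChans Γ ⊆ ↑S.res ∧
  ∃ Δ : TyEnv, TyEnv.Consistent (Γ + Δ) ∧ HasTy Δ S.proc ∧ TyEnv.domChans Δ ⊆ ↑S.res

/-- The costed reduction relation M ▹ P →ₖ N ▹ Q. -/
inductive Red : System → ℤ → System → Prop
  | com {M : Finset Chan} {c : Chan} {ds : List Chan} {xs : List Var} {P Q : Proc} :
      c ∈ M → xs.length = ds.length →
      Red ⟨M, .par (.output (.ch c) (ds.map Ident.ch) P) (.input (.ch c) xs Q)⟩ 0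
          ⟨M, .par P (Q.subst (substOf xs ds))⟩
  | ifThen {M : Finset Chan} {c : Chan} {P Q : Proc} :
      c ∈ M → Red ⟨M, .ifeq (.ch c) (.ch c) P Q⟩ 0 ⟨M, P⟩
  | ifElse {M : Finset Chan} {c d : Chan} {P Q : Proc} :
      c ∈ M → d ∈ M → c ≠ d → Red ⟨M, .ifeq (.ch c) (.ch d) P Q⟩ 0 ⟨M, Q⟩
  | unfold {M : Finset Chan} {w : Var} {P : Proc} :
      Red ⟨M, .recur w P⟩ 0 ⟨M, P.substProc w (.recur w P)⟩
  | alloc {M : Finset Chan} {c : Chan} {x : Var} {P : Proc} :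
      c ∉ M → Red ⟨M, .alloc x P⟩ 1 ⟨insert c M, P.subst (substOf [x] [c])⟩
  | free {M : Finset Chan} {c : Chan} {P : Proc} :
      c ∈ M → Red ⟨M, .free (.ch c) P⟩ (-1) ⟨M.erase c, P⟩
  | str {M M' : Finset Chan} {P P' Q Q' : Proc} {k : ℤ} :
      StructEq P P' → Red ⟨M, P'⟩ k ⟨M', Q'⟩ → StructEq Q' Q → Red ⟨M, P⟩ k ⟨M', Q⟩
  | parL {M M' : Finset Chan} {P P' Q : Proc} {k : ℤ} :
      Red ⟨M, P⟩ k ⟨M', P'⟩ → Red ⟨M, .par P Q⟩ k ⟨M', .par P' Q⟩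
  | parR {M M' : Finset Chan} {P Q Q' : Proc} {k : ℤ} :
      Red ⟨M, Q⟩ k ⟨M', Q'⟩ → Red ⟨M, .par P Q⟩ k ⟨M', .par P Q'⟩

/-- Reflexive-transitive closure of reduction, accumulating costs. -/
inductive RedStar : System → ℤ → System → Prop
  | refl (S) : RedStar S 0 S
  | step {S S' S'' : System} {k l : ℤ} :
      RedStar S k S' → Red S' l S'' → RedStar S (k + l) S''

/-- Actions of the (pre-)LTS. -/
inductive Act : Type
  | out (c : Chan) (ds : List Chan)
  | inp (c : Chan) (ds : List Chan)
  | tau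
  | alloc
  | free (c : Chan)
  | env

/-- The pre-LTS over triples Γ ◃ M ▹ P. -/
inductive PreStep : TyEnv → System → Act → ℤ → TyEnv → System → Prop
  | lOut {Γ Δ : TyEnv} {c : Chan} {ts : List Ty} {a : Attr} {ds : List Chan}
      {P : Proc} {M : Finset Chan} :
      predEnv (.ch c) ts a = some Δ → ds.length = ts.length →
      PreStep (Γ + {(Ident.ch c, Ty.chan ts a)})
        ⟨M, .output (.ch c) (ds.map Ident.ch) P⟩ (.out c ds) 0
        (Γ + Δ + Multiset.ofList ((ds.map Ident.ch).zip ts)) ⟨M, P⟩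
  | lIn {Γ Δ : TyEnv} {c : Chan} {ts : List Ty} {a : Attr} {ds : List Chan}
      {xs : List Var} {P : Proc} {M : Finset Chan} :
      predEnv (.ch c) ts a = some Δ → ds.length = ts.length → xs.length = ds.length →
      PreStep (Γ + {(Ident.ch c, Ty.chan ts a)} + Multiset.ofList ((ds.map Ident.ch).zip ts))
        ⟨M, .input (.ch c) xs P⟩ (.inp c ds) 0
        (Γ + Δ) ⟨M, P.subst (substOf xs ds)⟩
  | lComL {Γ₁ Γ₁' Γ₂ Γ₂' Γ : TyEnv} {M : Finset Chan} {c : Chan} {ds : List Chan}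
      {P P' Q Q' : Proc} :
      PreStep Γ₁ ⟨M, P⟩ (.out c ds) 0 Γ₁' ⟨M, P'⟩ →
      PreStep Γ₂ ⟨M, Q⟩ (.inp c ds) 0 Γ₂' ⟨M, Q'⟩ →
      PreStep Γ ⟨M, .par P Q⟩ .tau 0 Γ ⟨M, .par P' Q'⟩
  | lComR {Γ₁ Γ₁' Γ₂ Γ₂' Γ : TyEnv} {M : Finset Chan} {c : Chan} {ds : List Chan}
      {P P' Q Q' : Proc} :
      PreStep Γ₁ ⟨M, Q⟩ (.out c ds) 0 Γ₁' ⟨M, Q'⟩ →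
      PreStep Γ₂ ⟨M, P⟩ (.inp c ds) 0 Γ₂' ⟨M, P'⟩ →
      PreStep Γ ⟨M, .par P Q⟩ .tau 0 Γ ⟨M, .par P' Q'⟩
  | lParL {Γ Γ' : TyEnv} {M M' : Finset Chan} {P P' Q : Proc} {μ : Act} {k : ℤ} :
      PreStep Γ ⟨M, P⟩ μ k Γ' ⟨M', P'⟩ →
      PreStep Γ ⟨M, .par P Q⟩ μ k Γ' ⟨M', .par P' Q⟩
  | lParR {Γ Γ' : TyEnv} {M M' : Finset Chan} {P Q Q' : Proc} {μ : Act} {k : ℤ} :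
      PreStep Γ ⟨M, Q⟩ μ k Γ' ⟨M', Q'⟩ →
      PreStep Γ ⟨M, .par P Q⟩ μ k Γ' ⟨M', .par P Q'⟩
  | lStr {Γ Γ' : TyEnv} {M : Finset Chan} {P : Proc} :
      EnvStruct Γ Γ' → PreStep Γ ⟨M, P⟩ .env 0 Γ' ⟨M, P⟩
  | lRec {Γ : TyEnv} {M : Finset Chan} {w : Var} {P : Proc} :
      PreStep Γ ⟨M, .recur w P⟩ .tau 0 Γ ⟨M, P.substProc w (.recur w P)⟩
  | lThen {Γ : TyEnv} {M : Finset Chan} {c : Chan} {P Q : Proc} :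
      c ∈ M → PreStep Γ ⟨M, .ifeq (.ch c) (.ch c) P Q⟩ .tau 0 Γ ⟨M, P⟩
  | lElse {Γ : TyEnv} {M : Finset Chan} {c d : Chan} {P Q : Proc} :
      c ∈ M → d ∈ M → c ≠ d →
      PreStep Γ ⟨M, .ifeq (.ch c) (.ch d) P Q⟩ .tau 0 Γ ⟨M, Q⟩
  | lAll {Γ : TyEnv} {M : Finset Chan} {c : Chan} {x : Var} {P : Proc} :
      c ∉ M →
      PreStep Γ ⟨M, .alloc x P⟩ .tau 1 Γ ⟨insert c M, P.subst (substOf [x] [c])⟩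
  | lAllE {Γ : TyEnv} {M : Finset Chan} {c : Chan} {ts : List Ty} {P : Proc} :
      c ∉ M →
      PreStep Γ ⟨M, P⟩ .alloc 1 (Γ + {(Ident.ch c, Ty.chan ts (.unq 0))}) ⟨insert c M, P⟩
  | lFree {Γ : TyEnv} {M : Finset Chan} {c : Chan} {P : Proc} :
      c ∉ M → PreStep Γ ⟨insert c M, .free (.ch c) P⟩ .tau (-1) Γ ⟨M, P⟩
  | lFreeE {Γ : TyEnv} {M : Finset Chan} {c : Chan} {ts : List Ty} {P : Proc} :
      c ∉ M →
      PreStep (Γ + {(Ident.ch c, Ty.chan ts (.unq 0))}) ⟨insert c M, P⟩ (.free c) (-1) Γ ⟨M, P⟩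

/-- The costed LTS: the pre-LTS closed under renamings that are invisible to
the observer (rule lRen). -/
def Step (Γ : TyEnv) (S : System) (μ : Act) (k : ℤ) (Γ' : TyEnv) (S' : System) : Prop :=
  ∃ σ : Equiv.Perm Chan, (∀ c ∈ TyEnv.domChans Γ, σ c = c) ∧
    PreStep Γ (S.rename ⇑σ) μ k Γ' S'

/-- Weak (cost-accumulating) transitions. -/
inductive Weak : TyEnv → System → Act → ℤ → TyEnv → System → Prop
  | single {Γ Γ' : TyEnv} {S S' : System} {μ : Act} {k : ℤ} :
      Step Γ S μ k Γ' S' → Weak Γ S μ k Γ' S'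
  | tauLeft {Γ Γ₁ Γ' : TyEnv} {S S₁ S' : System} {μ : Act} {l k : ℤ} :
      Step Γ S .tau l Γ₁ S₁ → Weak Γ₁ S₁ μ k Γ' S' → Weak Γ S μ (l + k) Γ' S'
  | tauRight {Γ Γ₁ Γ' : TyEnv} {S S₁ S' : System} {μ : Act} {l k : ℤ} :
      Weak Γ S μ l Γ₁ S₁ → Step Γ₁ S₁ .tau k Γ' S' → Weak Γ S μ (l + k) Γ' S'

/-- Weak μ̂ transition: for μ = τ the matching move may be empty. -/
def WeakHat (Γ : TyEnv) (S : System) (μ : Act) (k : ℤ) (Γ' : TyEnv) (S' : System) : Prop :=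
  Weak Γ S μ k Γ' S' ∨ (μ = .tau ∧ k = 0 ∧ Γ' = Γ ∧ S' = S)

/-- Amortised type-indexed relations on systems. -/
abbrev ARel := TyEnv → ℕ → System → System → Prop

/-- Both related triples must be configurations. -/
def IsAmortisedRel (R : ARel) : Prop :=
  ∀ Γ n S T, R Γ n S T → IsConfig Γ S ∧ IsConfig Γ T

/-- Amortised typed bisimulation. -/
def IsAmortisedBisim (R : ARel) : Prop :=
  IsAmortisedRel R ∧
  ∀ Γ n S T, R Γ n S T →
    (∀ μ k Γ' S', Step Γ S μ k Γ' S' →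
      ∃ (T' : System) (l : ℤ) (m : ℕ), WeakHat Γ T μ l Γ' T' ∧ (m : ℤ) = (n : ℤ) + l - k ∧ R Γ' m S' T') ∧
    (∀ μ l Γ' T', Step Γ T μ l Γ' T' →
      ∃ (S' : System) (k : ℤ) (m : ℕ), WeakHat Γ S μ k Γ' S' ∧ (m : ℤ) = (n : ℤ) + l - k ∧ R Γ' m S' T')

/-- Amortised bisimilarity at Γ with credit n : Γ ⊨ S ≲ⁿ T. -/
def Bisim (Γ : TyEnv) (n : ℕ) (S T : System) : Prop :=
  ∃ R : ARel, IsAmortisedBisim R ∧ R Γ n S T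

/-- Γ ⊨ S ≲ T : bisimilarity at some credit. -/
def BisimAny (Γ : TyEnv) (S T : System) : Prop := ∃ n, Bisim Γ n S T

/-- Bounded by m : every credit occurring in the relation is at most m. -/
def BoundedBy (R : ARel) (m : ℕ) : Prop := ∀ Γ n S T, R Γ n S T → n ≤ m

/-- Γ ⊨^m S ≲ T : related by some m-bounded amortised typed bisimulation. -/
def BoundedBisim (m : ℕ) (Γ : TyEnv) (S T : System) : Prop :=
  ∃ (R : ARel) (n : ℕ), IsAmortisedBisim R ∧ BoundedBy R m ∧ n ≤ m ∧ R Γ n S T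

/-- Barbs: (Γ ◃ M ▹ P) ⇓ c. -/
def Barb (Γ : TyEnv) (S : System) (c : Chan) : Prop :=
  (∃ (k : ℤ) (M' : Finset Chan) (R P' : Proc) (ds : List Ident) (P'' : Proc),
      RedStar S k ⟨M', R⟩ ∧ StructEq R (.par P' (.output (.ch c) ds P''))) ∧
  c ∈ TyEnv.domChans Γ

def BarbPreserving (R : ARel) : Prop :=
  ∀ Γ n S T, R Γ n S T → ∀ c, (Barb Γ S c ↔ Barb Γ T c)

def CostImproving (R : ARel) : Prop :=
  ∀ Γ n S T, R Γ n S T →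
    (∀ (k : ℤ) (S' : System), Red S k S' →
      ∃ (l : ℤ) (T' : System) (m : ℕ),
        RedStar T l T' ∧ (m : ℤ) = (n : ℤ) + l - k ∧ R Γ m S' T') ∧
    (∀ (l : ℤ) (T' : System), Red T l T' →
      ∃ (k : ℤ) (S' : System) (m : ℕ),
        RedStar S k S' ∧ (m : ℤ) = (n : ℤ) + l - k ∧ R Γ m S' T')

def FullyContextual (R : ARel) : Prop :=
  ∀ Γ n S T, R Γ n S T →
    (∀ (c : Chan) (ts : List Ty), c ∉ S.res → c ∉ T.res →
      R (Γ + {(Ident.ch c, Ty.chan ts (.unq 0))}) n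
        ⟨insert c S.res, S.proc⟩ ⟨insert c T.res, T.proc⟩) ∧
    (∀ (Γ₁ Γ₂ : TyEnv) (R₀ : Proc), EnvStruct Γ (Γ₁ + Γ₂) → HasTy Γ₂ R₀ →
      R Γ₁ n ⟨S.res, .par S.proc R₀⟩ ⟨T.res, .par T.proc R₀⟩ ∧
      R Γ₁ n ⟨S.res, .par R₀ S.proc⟩ ⟨T.res, .par R₀ T.proc⟩)

def IsContextualFamily (R : ARel) : Prop :=
  IsAmortisedRel R ∧ BarbPreserving R ∧ CostImproving R ∧ FullyContextual R

/-- The behavioural contextual preorder Γ ⊨ S ⊑ⁿ T. -/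
def CtxPre (Γ : TyEnv) (n : ℕ) (S T : System) : Prop :=
  ∃ R : ARel, IsContextualFamily R ∧ R Γ n S T

def CtxPreAny (Γ : TyEnv) (S T : System) : Prop := ∃ n, CtxPre Γ n S T

/-!
A reduction of `S` is a τ-transition of the costed LTS, up to structural equivalence of the
residual, so the bisimulation answers it by a weak τ-transition of `T` with matching credit. On
configurations every τ-transition is a reduction up to a renaming fixing the observer's channels:
the communicating channel is allocated because the process is typed. So the answer is a
reduction sequence of `T` ending in a renamed copy of the bisimulation's partner. Finally,
closing an amortised bisimulation on both sides under renamings invisible to `Γ` and structural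
equivalence gives again an amortised bisimulation, as transitions transfer along both at equal
cost.
-/

/-! ### Renaming and substitution -/

@[simp] theorem Ident.rename_var (σ : Chan → Chan) (x : Var) :
    (Ident.var x).rename σ = .var x :=
  rfl

@[simp] theorem Ident.rename_id : Ident.rename id = id := by
  funext u; cases u <;> rfl

@[simp] theorem Ident.rename_rename (f g : Chan → Chan) (u : Ident) :
    (u.rename f).rename g = u.rename (g ∘ f) := by
  cases u <;> rfl

@[simp] theorem Proc.rename_id (P : Proc) : P.rename id = P := by
  induction P <;> simp_all [Proc.rename]

@[simp] theorem Proc.rename_rename (f g : Chan → Chan) (P : Proc) :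
    (P.rename f).rename g = P.rename (g ∘ f) := by
  induction P <;> simp_all [Proc.rename, Function.comp_def]

theorem System.rename_rename (S : System) (σ τ : Equiv.Perm Chan) :
    (S.rename σ).rename τ = S.rename ⇑(τ * σ) := by
  simp [System.rename, Finset.image_image, Equiv.Perm.coe_mul]

@[simp] theorem System.rename_id (S : System) : S.rename id = S := by
  simp [System.rename]

@[simp] theorem System.rename_one (S : System) : S.rename ⇑(1 : Equiv.Perm Chan) = S :=
  S.rename_id

theorem System.rename_inv_rename (S : System) (σ : Equiv.Perm Chan) :
    (S.rename σ).rename ⇑σ⁻¹ = S := by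
  rw [System.rename_rename, inv_mul_cancel, System.rename_one]

def FixesDom (Γ : TyEnv) (σ : Equiv.Perm Chan) : Prop := ∀ c ∈ Γ.domChans, σ c = c

theorem FixesDom.one (Γ : TyEnv) : FixesDom Γ 1 := fun _ _ => rfl

theorem FixesDom.inv (h : FixesDom Γ σ) : FixesDom Γ σ⁻¹ := fun c hc => by
  rw [Equiv.Perm.inv_eq_iff_eq, h c hc]

theorem FixesDom.mul (h₁ : FixesDom Γ σ) (h₂ : FixesDom Γ τ) : FixesDom Γ (σ * τ) :=
  fun c hc => by rw [Equiv.Perm.mul_apply, h₂ c hc, h₁ c hc]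

theorem Proc.freeVars_rename (σ : Chan → Chan) (P : Proc) :
    (P.rename σ).freeVars = P.freeVars := by
  have hu : ∀ u : Ident, (u.rename σ).vars = u.vars := by intro u; cases u <;> rfl
  have hl : ∀ l : List Ident, listVars (l.map (Ident.rename σ)) = listVars l := by
    intro l; ext x; simp [listVars, hu]
  induction P <;> simp_all [Proc.rename, Proc.freeVars]

theorem Proc.chans_rename (σ : Chan → Chan) (P : Proc) :
    (P.rename σ).chans = σ '' P.chans := by
  have hu : ∀ u : Ident, (u.rename σ).chans = σ '' u.chans := by
    intro u; cases u <;> simp [Ident.rename, Ident.chans]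
  have hl : ∀ l : List Ident, listChans (l.map (Ident.rename σ)) = σ '' listChans l := by
    intro l; ext c
    simp only [listChans, List.mem_map, exists_exists_and_eq_and, hu, Set.mem_image,
      Set.mem_ofPred_eq]
    aesop
  induction P <;> simp_all [Proc.rename, Proc.chans, Set.image_union]

namespace StructEq

theorem par_par_swap (A B C D : Proc) :
    StructEq (.par (.par A B) (.par C D)) (.par (.par A C) (.par B D)) :=
  (assoc A B _).symm.trans <| (parCong (refl A) (assoc B C D)).trans <|
    (parCong (refl A) (parCong (comm B C) (refl D))).trans <|
    (parCong (refl A) (assoc C B D).symm).trans (assoc A C _)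

theorem freeVars_eq (h : StructEq P Q) : P.freeVars = Q.freeVars := by
  induction h <;> simp_all [Proc.freeVars] <;> ac_rfl

theorem chans_eq (h : StructEq P Q) : P.chans = Q.chans := by
  induction h <;> simp_all [Proc.chans] <;> ac_rfl

theorem rename (σ : Chan → Chan) (h : StructEq P Q) : StructEq (P.rename σ) (Q.rename σ) := by
  induction h with
  | refl => exact refl _
  | symm _ ih => exact ih.symm
  | trans _ _ ih₁ ih₂ => exact ih₁.trans ih₂
  | comm => exact comm _ _
  | assoc => exact assoc _ _ _
  | nil => exact nil _
  | parCong _ _ ih₁ ih₂ => exact parCong ih₁ ih₂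

end StructEq

theorem Ident.rename_subst (ρ : Chan → Chan) (σ : Var → Option Chan) (u : Ident) :
    (u.subst σ).rename ρ = (u.rename ρ).subst (fun x => (σ x).map ρ) := by
  cases u with
  | ch c => rfl
  | var x => simp only [Ident.subst, Ident.rename]; cases σ x <;> rfl

theorem removeVars_map (ρ : Chan → Chan) (σ : Var → Option Chan) (xs : List Var) :
    (fun x => (removeVars σ xs x).map ρ) = removeVars (fun x => (σ x).map ρ) xs := by
  funext x; unfold removeVars; split <;> rfl

theorem Proc.rename_subst (ρ : Chan → Chan) (σ : Var → Option Chan) (P : Proc) :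
    (P.subst σ).rename ρ = (P.rename ρ).subst (fun x => (σ x).map ρ) := by
  induction P generalizing σ <;>
    simp_all [Proc.subst, Proc.rename, Ident.rename_subst, removeVars_map, Function.comp_def]

theorem substOf_map (ρ : Chan → Chan) (xs : List Var) (ds : List Chan) (x : Var) :
    (substOf xs ds x).map ρ = substOf xs (ds.map ρ) x := by
  induction xs generalizing ds with
  | nil => simp [substOf]
  | cons y ys ih =>
      cases ds with
      | nil => simp [substOf]
      | cons d ds =>
          by_cases hxy : x = y
          · simp [substOf, hxy]
          · simp only [substOf, List.map_cons, List.zip_cons_cons, List.lookup,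
              beq_false_of_ne hxy]
            exact ih ds

theorem Proc.rename_substProc (ρ : Chan → Chan) (w : Var) (R P : Proc) :
    (Proc.substProc w R P).rename ρ = Proc.substProc w (R.rename ρ) (P.rename ρ) := by
  induction P <;> simp only [Proc.substProc, Proc.rename] <;> (try split_ifs) <;>
    simp_all [Proc.rename]

theorem Red.rename {σ : Chan → Chan} (hσ : Function.Injective σ) (h : Red S k S') :
    Red (S.rename σ) k (S'.rename σ) := by
  induction h with
  | @com M c ds xs P Q hc hlen =>
      have := Red.com (M := M.image σ) (ds := ds.map σ) (P := P.rename σ) (Q := Q.rename σ)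
        (Finset.mem_image_of_mem σ hc) (by simpa using hlen)
      simpa [System.rename, Proc.rename, Ident.rename, Function.comp_def,
        Proc.rename_subst, substOf_map] using this
  | ifThen hc => exact .ifThen (Finset.mem_image_of_mem σ hc)
  | ifElse hc hd hne =>
      exact .ifElse (Finset.mem_image_of_mem σ hc) (Finset.mem_image_of_mem σ hd) (hσ.ne hne)
  | unfold => simpa [System.rename, Proc.rename, Proc.rename_substProc] using Red.unfold
  | @alloc M c x P hc =>
      have := Red.alloc (x := x) (P := P.rename σ) (mt hσ.mem_finset_image.mp hc)
      simpa [System.rename, Proc.rename, Finset.image_insert, Proc.rename_subst, substOf_map]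
        using this
  | @free M c P hc =>
      have := Red.free (P := P.rename σ) (Finset.mem_image_of_mem σ hc)
      simpa [System.rename, Proc.rename, Ident.rename, Finset.image_erase hσ] using this
  | str h₁ _ h₂ ih => exact .str (h₁.rename σ) ih (h₂.rename σ)
  | parL _ ih => exact .parL ih
  | parR _ ih => exact .parR ih

theorem RedStar.rename {σ : Chan → Chan} (hσ : Function.Injective σ) (h : RedStar S k S') :
    RedStar (S.rename σ) k (S'.rename σ) := by
  induction h with
  | refl => exact .refl _
  | step _ h ih => exact ih.step (h.rename hσ)

theorem RedStar.single (h : Red S k S') : RedStar S k S' := by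
  simpa using (RedStar.refl S).step h

theorem RedStar.head (h₁ : Red S l S') (h₂ : RedStar S' k S'') : RedStar S (l + k) S'' := by
  induction h₂ with
  | refl => simpa using RedStar.single h₁
  | step _ h ih => simpa [add_assoc] using ih.step h

/-! ### Typing and configurations -/

namespace TyEnv

@[simp] theorem domChans_add (A B : TyEnv) : (A + B).domChans = A.domChans ∪ B.domChans := by
  ext c; simp [domChans, exists_or]

@[simp] theorem domChans_zero : domChans 0 = ∅ := by
  simp [domChans]

@[simp] theorem domChans_singleton (u : Ident) (T : Ty) :
    domChans {(u, T)} = u.chans := by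
  ext c; cases u <;> simp [domChans, Ident.chans, eq_comm]

theorem domChans_zip {vs : List Ident} {ts : List Ty} :
    domChans (vs.zip ts : TyEnv) ⊆ listChans vs := by
  rintro c ⟨T, hT⟩
  exact ⟨_, (List.of_mem_zip (Multiset.mem_coe.mp hT)).1, rfl⟩

theorem listChans_subset_domChans_zip {vs : List Ident} {ts : List Ty}
    (hlen : vs.length = ts.length) : listChans vs ⊆ domChans (vs.zip ts : TyEnv) := by
  rintro c ⟨u, hu, hc⟩
  obtain ⟨i, hi, rfl⟩ := List.getElem_of_mem hu
  cases h : vs[i] with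
  | var x => simp [h, Ident.chans] at hc
  | ch d =>
      simp only [h, Ident.chans, Set.mem_singleton_iff] at hc
      subst hc
      refine ⟨ts[i], Multiset.mem_coe.mpr ?_⟩
      rw [← h]
      exact List.mem_iff_getElem.mpr ⟨i, by simp [hi, ← hlen], by simp⟩

end TyEnv

theorem listChans_map_var (xs : List Var) : listChans (xs.map Ident.var) = ∅ := by
  ext c; simp [listChans, Ident.chans]

theorem EnvStruct.add_left (C : TyEnv) (h : EnvStruct A B) : EnvStruct (C + A) (C + B) := by
  induction h with
  | refl => exact .refl _
  | trans _ _ ih₁ ih₂ => exact ih₁.trans ih₂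
  | con hs => rw [← add_assoc, ← add_assoc]; exact .con hs
  | join hs => rw [← add_assoc, ← add_assoc]; exact .join hs
  | weak Γ u T => rw [← add_assoc]; exact .weak _ u T
  | tyEq he => rw [← add_assoc, ← add_assoc]; exact .tyEq he
  | sub hs => rw [← add_assoc, ← add_assoc]; exact .sub hs
  | rev Γ u ts₁ ts₂ => rw [← add_assoc, ← add_assoc]; exact .rev _ u ts₁ ts₂

theorem EnvStruct.domChans_subset (h : EnvStruct Γ Γ') : Γ'.domChans ⊆ Γ.domChans := by
  induction h with
  | refl => exact subset_rfl
  | trans _ _ ih₁ ih₂ => exact ih₂.trans ih₁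
  | _ => intro c; simp [Multiset.insert_eq_cons, ← Multiset.singleton_add] <;> tauto

theorem predEnv_domChans {u : Ident} {ts : List Ty} {a : Attr} {Δ : TyEnv}
    (h : predEnv u ts a = some Δ) : Δ.domChans ⊆ u.chans := by
  rcases a with _ | _ | _ | i <;> simp only [predEnv, Option.some.injEq, reduceCtorEq] at h <;>
    subst h <;> simp

theorem Ident.chans_subset_domChans {u : Ident} {Γ : TyEnv} (h : ∃ T, (u, T) ∈ Γ) :
    u.chans ⊆ Γ.domChans := by
  obtain ⟨T, hT⟩ := h
  cases u with
  | ch c => simpa [Ident.chans] using ⟨T, hT⟩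
  | var x => simp [Ident.chans]

theorem HasTy.chans_subset (h : HasTy Γ P) : P.chans ⊆ Γ.domChans := by
  induction h with
  | out hpred hlen _ ih =>
      have hvs := TyEnv.listChans_subset_domChans_zip hlen
      have hΔ := predEnv_domChans hpred
      simp only [Proc.chans, TyEnv.domChans_add, TyEnv.domChans_singleton] at ih ⊢
      tauto_set
  | @inp _ _ _ ts _ xs _ hpred hlen _ ih =>
      have hxs := (TyEnv.domChans_zip (vs := xs.map Ident.var) (ts := ts)).trans
        (listChans_map_var xs).subset
      have hΔ := predEnv_domChans hpred
      simp only [Proc.chans, TyEnv.domChans_add, TyEnv.domChans_singleton] at ih ⊢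
      tauto_set
  | ifeq hu hv _ _ ih₁ ih₂ =>
      have := Ident.chans_subset_domChans hu
      have := Ident.chans_subset_domChans hv
      simp only [Proc.chans]
      tauto_set
  | par _ _ ih₁ ih₂ =>
      simp only [Proc.chans, TyEnv.domChans_add]
      tauto_set
  | free _ ih =>
      simp only [Proc.chans, TyEnv.domChans_add, TyEnv.domChans_singleton]
      tauto_set
  | str _ hes ih => exact ih.trans hes.domChans_subset
  | _ => simp_all [Proc.chans, Ident.chans]

theorem HasTy.envStruct_zero_of_nil (h : HasTy Γ .nil) : EnvStruct Γ 0 := by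
  generalize hP : Proc.nil = P at h
  induction h with
  | nil => exact .refl 0
  | str _ hes ih => exact hes.trans (ih hP)
  | _ => cases hP

theorem HasTy.par_inv (h : HasTy Γ (.par A B)) :
    ∃ Γ₁ Γ₂, EnvStruct Γ (Γ₁ + Γ₂) ∧ HasTy Γ₁ A ∧ HasTy Γ₂ B := by
  generalize hP : Proc.par A B = P at h
  induction h with
  | par h₁ h₂ => cases hP; exact ⟨_, _, .refl _, h₁, h₂⟩
  | str _ hes ih =>
      obtain ⟨Γ₁, Γ₂, hs, h₁, h₂⟩ := ih hP
      exact ⟨Γ₁, Γ₂, hes.trans hs, h₁, h₂⟩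
  | _ => cases hP

theorem HasTy.of_structEq (h : StructEq P Q) : HasTy Γ P ↔ HasTy Γ Q := by
  induction h generalizing Γ with
  | refl => rfl
  | symm _ ih => exact ih.symm
  | trans _ _ ih₁ ih₂ => exact ih₁.trans ih₂
  | comm A B =>
      suffices ∀ {Γ A B}, HasTy Γ (.par A B) → HasTy Γ (.par B A) from ⟨this, this⟩
      intro Γ A B h
      obtain ⟨Γ₁, Γ₂, hs, h₁, h₂⟩ := h.par_inv
      exact .str (.par h₂ h₁) (add_comm Γ₁ Γ₂ ▸ hs)
  | assoc A B C =>
      constructor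
      · intro h
        obtain ⟨Γ₁, Γ₂₃, hs, h₁, h₂₃⟩ := h.par_inv
        obtain ⟨Γ₂, Γ₃, hs', h₂, h₃⟩ := h₂₃.par_inv
        refine .str (.par (.par h₁ h₂) h₃) (hs.trans ?_)
        simpa [add_assoc] using hs'.add_left Γ₁
      · intro h
        obtain ⟨Γ₁₂, Γ₃, hs, h₁₂, h₃⟩ := h.par_inv
        obtain ⟨Γ₁, Γ₂, hs', h₁, h₂⟩ := h₁₂.par_inv
        refine .str (.par h₁ (.par h₂ h₃)) (hs.trans ?_)
        simpa [add_comm, add_left_comm] using hs'.add_left Γ₃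
  | nil A =>
      constructor
      · intro h
        obtain ⟨Γ₁, Γ₂, hs, h₁, h₂⟩ := h.par_inv
        exact .str h₁ (by simpa using hs.trans (h₂.envStruct_zero_of_nil.add_left Γ₁))
      · intro h
        simpa using HasTy.par h .nil
  | parCong _ _ ih₁ ih₂ =>
      constructor
      · intro h
        obtain ⟨Γ₁, Γ₂, hs, h₁, h₂⟩ := h.par_inv
        exact .str (.par (ih₁.mp h₁) (ih₂.mp h₂)) hs
      · intro h
        obtain ⟨Γ₁, Γ₂, hs, h₁, h₂⟩ := h.par_inv
        exact .str (.par (ih₁.mpr h₁) (ih₂.mpr h₂)) hs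

namespace TyEnv

@[simp] theorem rename_add (A B : TyEnv) (σ : Chan → Chan) :
    (A + B).rename σ = A.rename σ + B.rename σ := Multiset.map_add _ _ _

@[simp] theorem rename_singleton (u : Ident) (T : Ty) (σ : Chan → Chan) :
    rename {(u, T)} σ = {(u.rename σ, T)} := rfl

@[simp] theorem rename_pair (u : Ident) (T₁ T₂ : Ty) (σ : Chan → Chan) :
    rename {(u, T₁), (u, T₂)} σ = {(u.rename σ, T₁), (u.rename σ, T₂)} := by
  simp [rename]

theorem rename_zip (σ : Chan → Chan) (vs : List Ident) (ts : List Ty) :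
    rename (vs.zip ts : List _) σ = ((vs.map (Ident.rename σ)).zip ts : List _) := by
  simp only [rename, Multiset.map_coe, List.zip_map_left]
  rfl

theorem mem_domChans_rename {σ : Chan → Chan} {Γ : TyEnv} {c : Chan} :
    c ∈ (Γ.rename σ).domChans ↔ ∃ c₀ ∈ Γ.domChans, σ c₀ = c := by
  simp only [domChans, rename, Set.mem_ofPred_eq, Multiset.mem_map, Prod.exists]
  constructor
  · rintro ⟨T, u, T', hmem, heq⟩
    cases u with
    | ch c₀ => cases heq; exact ⟨c₀, ⟨T, hmem⟩, rfl⟩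
    | var x => cases heq
  · rintro ⟨c₀, ⟨T, hT⟩, rfl⟩
    exact ⟨T, _, T, hT, rfl⟩

theorem rename_eq_self {σ : Chan → Chan} {Γ : TyEnv} (hσ : ∀ c ∈ Γ.domChans, σ c = c) :
    Γ.rename σ = Γ := by
  refine (Multiset.map_congr rfl ?_).trans Γ.map_id
  rintro ⟨u, T⟩ hmem
  cases u with
  | ch c => simp [Ident.rename, hσ c ⟨T, hmem⟩]
  | var x => rfl

end TyEnv

open TyEnv in
theorem EnvStruct.rename (σ : Chan → Chan) (h : EnvStruct A B) :
    EnvStruct (A.rename σ) (B.rename σ) := by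
  induction h with
  | refl => exact .refl _
  | trans _ _ ih₁ ih₂ => exact ih₁.trans ih₂
  | con hs => simpa only [rename_add, rename_singleton, rename_pair] using .con hs
  | join hs => simpa only [rename_add, rename_singleton, rename_pair] using .join hs
  | weak Γ u T => simpa only [rename_add] using .weak _ _ _
  | tyEq he => simpa only [rename_add, rename_singleton] using .tyEq he
  | sub hs => simpa only [rename_add, rename_singleton] using .sub hs
  | rev Γ u ts₁ ts₂ => simpa only [rename_add, rename_singleton] using .rev _ _ _ _

theorem Ident.rename_injective {σ : Chan → Chan} (hσ : Function.Injective σ) :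
    Function.Injective (Ident.rename σ) := by
  rintro (c | x) (d | y) h <;> simp_all [Ident.rename, hσ.eq_iff]

theorem TyEnv.Consistent.rename {σ : Chan → Chan} (hσ : Function.Injective σ)
    (h : Consistent Γ) : Consistent (Γ.rename σ) := by
  obtain ⟨Γ₀, hpm, hes⟩ := h
  refine ⟨Γ₀.rename σ, ?_, hes.rename σ⟩
  unfold TyEnv.IsPartialMap at hpm ⊢
  simpa [TyEnv.rename, Multiset.map_map, Function.comp_def] using
    hpm.map (Ident.rename_injective hσ)

theorem predEnv_rename (σ : Chan → Chan) {u : Ident} {ts : List Ty} {a : Attr} {Δ : TyEnv}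
    (h : predEnv u ts a = some Δ) : predEnv (u.rename σ) ts a = some (Δ.rename σ) := by
  rcases a with _ | _ | _ | i <;> simp only [predEnv, Option.some.injEq, reduceCtorEq] at h ⊢ <;>
    subst h <;> rfl

theorem HasTy.rename (σ : Chan → Chan) (h : HasTy Γ P) :
    HasTy (Γ.rename σ) (P.rename σ) := by
  induction h with
  | out hpred hlen _ ih =>
      rw [TyEnv.rename_add] at ih
      simpa [Proc.rename, TyEnv.rename_zip] using .out (predEnv_rename σ hpred) (by simpa) ih
  | inp hpred hlen _ ih =>
      simp only [TyEnv.rename_add, TyEnv.rename_zip, List.map_map] at ih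
      simpa [Proc.rename] using .inp (predEnv_rename σ hpred) hlen ih
  | par _ _ ih₁ ih₂ => simpa using .par ih₁ ih₂
  | ifeq hu hv _ _ ih₁ ih₂ =>
      refine .ifeq ?_ ?_ ih₁ ih₂
      · obtain ⟨T, hT⟩ := hu; exact ⟨T, Multiset.mem_map_of_mem _ hT⟩
      · obtain ⟨T, hT⟩ := hv; exact ⟨T, Multiset.mem_map_of_mem _ hT⟩
  | recur hunr _ ih =>
      refine .recur ?_ (by simpa using ih)
      intro p hp
      obtain ⟨q, hq, rfl⟩ := Multiset.mem_map.mp hp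
      exact hunr q hq
  | pvar w => exact .pvar w
  | free _ ih => simpa [Proc.rename] using .free ih
  | alloc _ ih => exact .alloc (by simpa using ih)
  | nil => exact .nil
  | str _ hes ih => exact .str ih (hes.rename σ)

theorem IsConfig.rename {σ : Equiv.Perm Chan} (hσ : FixesDom Γ σ)
    (h : IsConfig Γ S) : IsConfig Γ (S.rename σ) := by
  obtain ⟨hcl, hdom, Δ, hcons, hty, hdomΔ⟩ := h
  refine ⟨?_, ?_, Δ.rename σ, ?_, hty.rename σ, ?_⟩
  · simpa [Proc.Closed, System.rename, Proc.freeVars_rename] using hcl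
  · intro c hc
    exact Finset.mem_image.mpr ⟨c, hdom hc, hσ c hc⟩
  · simpa [TyEnv.rename_eq_self hσ] using hcons.rename σ.injective
  · intro c hc
    obtain ⟨c₀, hc₀, rfl⟩ := TyEnv.mem_domChans_rename.mp hc
    exact Finset.mem_image.mpr ⟨c₀, hdomΔ hc₀, rfl⟩

theorem IsConfig.of_structEq {M : Finset Chan} (h : StructEq P Q) (hc : IsConfig Γ ⟨M, P⟩) :
    IsConfig Γ ⟨M, Q⟩ := by
  obtain ⟨hcl, hdom, Δ, hcons, hty, hdomΔ⟩ := hc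
  exact ⟨h.freeVars_eq.symm.trans hcl, hdom, Δ, hcons, (HasTy.of_structEq h).mp hty, hdomΔ⟩

theorem IsConfig.chans_subset (h : IsConfig Γ S) : S.proc.chans ⊆ S.res := by
  obtain ⟨-, -, Δ, -, hty, hdomΔ⟩ := h
  exact hty.chans_subset.trans hdomΔ

/-! ### Pre-transitions versus reductions -/

theorem PreStep.env_eq_of_tau (h : PreStep Γ S .tau k Γ' S') : Γ' = Γ := by
  generalize hμ : Act.tau = μ at h
  induction h <;> first | rfl | (rename_i ih; exact ih hμ) | cases hμ

theorem StructEq.frame_right (h : StructEq A (.par X C)) (Q : Proc) :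
    StructEq (.par A Q) (.par X (.par C Q)) :=
  (h.parCong (.refl Q)).trans (assoc _ _ _).symm

theorem StructEq.frame_left (h : StructEq A (.par X C)) (P : Proc) :
    StructEq (.par P A) (.par X (.par C P)) :=
  (comm _ _).trans (h.frame_right P)

theorem PreStep.out_inv (h : PreStep Γ S (.out c ds) k Γ' S') :
    ∃ P₀ C, StructEq S.proc (.par (.output (.ch c) (ds.map Ident.ch) P₀) C) ∧
      StructEq S'.proc (.par P₀ C) := by
  generalize hμ : Act.out c ds = μ at h
  induction h with
  | lOut => cases hμ; exact ⟨_, .nil, (StructEq.nil _).symm, (StructEq.nil _).symm⟩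
  | @lParL _ _ _ _ _ _ Q _ _ _ ih =>
      obtain ⟨P₀, C, h₁, h₂⟩ := ih hμ
      exact ⟨P₀, .par C Q, h₁.frame_right Q, h₂.frame_right Q⟩
  | @lParR _ _ _ _ P _ _ _ _ _ ih =>
      obtain ⟨P₀, C, h₁, h₂⟩ := ih hμ
      exact ⟨P₀, .par C P, h₁.frame_left P, h₂.frame_left P⟩
  | _ => cases hμ

theorem PreStep.inp_inv (h : PreStep Γ S (.inp c ds) k Γ' S') :
    ∃ xs Q₀ C, xs.length = ds.length ∧ StructEq S.proc (.par (.input (.ch c) xs Q₀) C) ∧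
      StructEq S'.proc (.par (Q₀.subst (substOf xs ds)) C) := by
  generalize hμ : Act.inp c ds = μ at h
  induction h with
  | lIn _ _ hxs =>
      cases hμ; exact ⟨_, _, .nil, hxs, (StructEq.nil _).symm, (StructEq.nil _).symm⟩
  | @lParL _ _ _ _ _ _ Q _ _ _ ih =>
      obtain ⟨xs, Q₀, C, hxs, h₁, h₂⟩ := ih hμ
      exact ⟨xs, Q₀, .par C Q, hxs, h₁.frame_right Q, h₂.frame_right Q⟩
  | @lParR _ _ _ _ P _ _ _ _ _ ih =>
      obtain ⟨xs, Q₀, C, hxs, h₁, h₂⟩ := ih hμ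
      exact ⟨xs, Q₀, .par C P, hxs, h₁.frame_left P, h₂.frame_left P⟩
  | _ => cases hμ

theorem Red.of_out_inp (ho : PreStep Γ₁ ⟨M, P⟩ (.out c ds) 0 Γ₁' ⟨M, P'⟩)
    (hi : PreStep Γ₂ ⟨M, Q⟩ (.inp c ds) 0 Γ₂' ⟨M, Q'⟩) (hc : c ∈ M) :
    Red ⟨M, .par P Q⟩ 0 ⟨M, .par P' Q'⟩ := by
  obtain ⟨P₀, C, hP, hP'⟩ := ho.out_inv
  obtain ⟨xs, Q₀, D, hxs, hQ, hQ'⟩ := hi.inp_inv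
  exact .str ((hP.parCong hQ).trans (.par_par_swap _ _ _ _)) (.parL (.com hc hxs))
    ((StructEq.par_par_swap _ _ _ _).symm.trans (hP'.parCong hQ').symm)

theorem PreStep.out_chan_mem (h : PreStep Γ S (.out c ds) k Γ' S') : c ∈ S.proc.chans := by
  obtain ⟨P₀, C, hP, -⟩ := h.out_inv
  simp [hP.chans_eq, Proc.chans, Ident.chans]

theorem PreStep.red_of_tau (h : PreStep Γ S .tau k Γ' S') (hS : S.proc.chans ⊆ S.res) :
    Red S k S' := by
  generalize hμ : Act.tau = μ at h
  induction h with
  | lComL ho hi => exact .of_out_inp ho hi (hS (.inl ho.out_chan_mem))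
  | lComR ho hi =>
      exact .str (.comm _ _) (.of_out_inp ho hi (hS (.inr ho.out_chan_mem))) (.comm _ _)
  | lParL _ ih => exact .parL (ih (fun c hc => hS (.inl hc)) hμ)
  | lParR _ ih => exact .parR (ih (fun c hc => hS (.inr hc)) hμ)
  | lRec => exact .unfold
  | lThen hc => exact .ifThen hc
  | lElse hc hd hne => exact .ifElse hc hd hne
  | lAll hc => exact .alloc hc
  | @lFree _ M c _ hc => simpa [Finset.erase_insert hc] using Red.free (Finset.mem_insert_self c M)
  | _ => cases hμ

def StepsLike (P Q : Proc) : Prop :=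
  ∀ Γ (M : Finset Chan) μ k Γ' (S' : System), PreStep Γ ⟨M, Q⟩ μ k Γ' S' →
    ∃ R', PreStep Γ ⟨M, P⟩ μ k Γ' ⟨S'.res, R'⟩ ∧ StructEq R' S'.proc

namespace StepsLike

theorem refl (P : Proc) : StepsLike P P := fun _ _ _ _ _ _ h => ⟨_, h, .refl _⟩

theorem trans (h₁ : StepsLike P Q) (h₂ : StepsLike Q R) : StepsLike P R := by
  intro Γ M μ k Γ' S' h
  obtain ⟨R₁, hs₁, he₁⟩ := h₂ Γ M μ k Γ' S' h
  obtain ⟨R₂, hs₂, he₂⟩ := h₁ Γ M μ k Γ' ⟨S'.res, R₁⟩ hs₁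
  exact ⟨R₂, hs₂, he₂.trans he₁⟩

theorem comm (A B : Proc) : StepsLike (.par A B) (.par B A) := by
  intro Γ M μ k Γ' S' h
  cases h with
  | lComL h₁ h₂ => exact ⟨_, .lComR h₁ h₂, .comm _ _⟩
  | lComR h₁ h₂ => exact ⟨_, .lComL h₁ h₂, .comm _ _⟩
  | lParL hs => exact ⟨_, .lParR hs, .comm _ _⟩
  | lParR hs => exact ⟨_, .lParL hs, .comm _ _⟩
  | lStr hes => exact ⟨_, .lStr hes, .comm _ _⟩
  | lAllE hc => exact ⟨_, .lAllE hc, .comm _ _⟩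
  | lFreeE hc => exact ⟨_, .lFreeE hc, .comm _ _⟩

theorem par_nil (A : Proc) : StepsLike (.par A .nil) A :=
  fun _ _ _ _ _ S' h => ⟨.par S'.proc .nil, .lParL h, .nil _⟩

theorem of_par_nil (A : Proc) : StepsLike A (.par A .nil) := by
  intro Γ M μ k Γ' S' h
  cases h with
  | lComL _ h₂ => cases h₂
  | lComR h₁ _ => cases h₁
  | lParL hs => exact ⟨_, hs, (StructEq.nil _).symm⟩
  | lParR hs =>
      cases hs with
      | lStr hes => exact ⟨_, .lStr hes, (StructEq.nil _).symm⟩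
      | lAllE hc => exact ⟨_, .lAllE hc, (StructEq.nil _).symm⟩
      | lFreeE hc => exact ⟨_, .lFreeE hc, (StructEq.nil _).symm⟩
  | lStr hes => exact ⟨_, .lStr hes, (StructEq.nil _).symm⟩
  | lAllE hc => exact ⟨_, .lAllE hc, (StructEq.nil _).symm⟩
  | lFreeE hc => exact ⟨_, .lFreeE hc, (StructEq.nil _).symm⟩

theorem assoc (A B C : Proc) : StepsLike (.par A (.par B C)) (.par (.par A B) C) := by
  intro Γ M μ k Γ' S' h
  cases h with
  | lComL h₁ h₂ =>
      cases h₁ with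
      | lParL ho => exact ⟨_, .lComL ho (.lParR h₂), .assoc _ _ _⟩
      | lParR ho => exact ⟨_, .lParR (.lComL ho h₂), .assoc _ _ _⟩
  | lComR h₁ h₂ =>
      cases h₂ with
      | lParL hi => exact ⟨_, .lComR (.lParR h₁) hi, .assoc _ _ _⟩
      | lParR hi => exact ⟨_, .lParR (.lComR h₁ hi), .assoc _ _ _⟩
  | lParL hs =>
      cases hs with
      | lParL h' => exact ⟨_, .lParL h', .assoc _ _ _⟩
      | lParR h' => exact ⟨_, .lParR (.lParL h'), .assoc _ _ _⟩
      | lComL h₁ h₂ => exact ⟨_, .lComL h₁ (.lParL h₂), .assoc _ _ _⟩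
      | lComR h₁ h₂ => exact ⟨_, .lComR (.lParL h₁) h₂, .assoc _ _ _⟩
      | lStr hes => exact ⟨_, .lStr hes, .assoc _ _ _⟩
      | lAllE hc => exact ⟨_, .lAllE hc, .assoc _ _ _⟩
      | lFreeE hc => exact ⟨_, .lFreeE hc, .assoc _ _ _⟩
  | lParR hs => exact ⟨_, .lParR (.lParR hs), .assoc _ _ _⟩
  | lStr hes => exact ⟨_, .lStr hes, .assoc _ _ _⟩
  | lAllE hc => exact ⟨_, .lAllE hc, .assoc _ _ _⟩
  | lFreeE hc => exact ⟨_, .lFreeE hc, .assoc _ _ _⟩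

theorem assoc_symm (A B C : Proc) : StepsLike (.par (.par A B) C) (.par A (.par B C)) :=
  (comm _ C).trans <| (assoc C A B).trans <| (comm _ B).trans <| (assoc B C A).trans (comm _ A)

theorem parCong (hA : StructEq A A') (hB : StructEq B B') (iha : StepsLike A A')
    (ihb : StepsLike B B') : StepsLike (.par A B) (.par A' B') := by
  intro Γ M μ k Γ' S' h
  cases h with
  | lComL ho hi =>
      obtain ⟨Ra, ha, sa⟩ := iha _ _ _ _ _ _ ho
      obtain ⟨Rb, hb, sb⟩ := ihb _ _ _ _ _ _ hi
      exact ⟨.par Ra Rb, .lComL ha hb, .parCong sa sb⟩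
  | lComR ho hi =>
      obtain ⟨Rb, hb, sb⟩ := ihb _ _ _ _ _ _ ho
      obtain ⟨Ra, ha, sa⟩ := iha _ _ _ _ _ _ hi
      exact ⟨.par Ra Rb, .lComR hb ha, .parCong sa sb⟩
  | lParL hs =>
      obtain ⟨Ra, ha, sa⟩ := iha _ _ _ _ _ _ hs
      exact ⟨.par Ra B, .lParL ha, .parCong sa hB⟩
  | lParR hs =>
      obtain ⟨Rb, hb, sb⟩ := ihb _ _ _ _ _ _ hs
      exact ⟨.par A Rb, .lParR hb, .parCong hA sb⟩
  | lStr hes => exact ⟨_, .lStr hes, .parCong hA hB⟩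
  | lAllE hc => exact ⟨_, .lAllE hc, .parCong hA hB⟩
  | lFreeE hc => exact ⟨_, .lFreeE hc, .parCong hA hB⟩

end StepsLike

theorem StructEq.stepsLike (h : StructEq P Q) : StepsLike P Q ∧ StepsLike Q P := by
  induction h with
  | refl P => exact ⟨.refl P, .refl P⟩
  | symm _ ih => exact ih.symm
  | trans _ _ ih₁ ih₂ => exact ⟨ih₁.1.trans ih₂.1, ih₂.2.trans ih₁.2⟩
  | comm A B => exact ⟨.comm A B, .comm B A⟩
  | assoc A B C => exact ⟨.assoc A B C, .assoc_symm A B C⟩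
  | nil A => exact ⟨.par_nil A, .of_par_nil A⟩
  | parCong h₁ h₂ ih₁ ih₂ =>
      exact ⟨.parCong h₁ h₂ ih₁.1 ih₂.1, .parCong h₁.symm h₂.symm ih₁.2 ih₂.2⟩

theorem Red.exists_preStep (Γ : TyEnv) (h : Red S k S') :
    ∃ Q, PreStep Γ S .tau k Γ ⟨S'.res, Q⟩ ∧ StructEq Q S'.proc := by
  induction h with
  | @com M c ds xs P Q hc hlen =>
      -- the pre-LTS ignores the types of the communicated names, so any will do
      let ts := List.replicate ds.length Ty.proc
      exact ⟨_, .lComL (.lOut (Γ := 0) (a := .unr) (ts := ts) (ds := ds) rfl (by simp [ts]))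
        (.lIn (Γ := 0) (a := .unr) (ts := ts) rfl (by simp [ts]) hlen), .refl _⟩
  | ifThen hc => exact ⟨_, .lThen hc, .refl _⟩
  | ifElse hc hd hne => exact ⟨_, .lElse hc hd hne, .refl _⟩
  | unfold => exact ⟨_, .lRec, .refl _⟩
  | alloc hc => exact ⟨_, .lAll hc, .refl _⟩
  | @free M c P hc =>
      have := PreStep.lFree (Γ := Γ) (P := P) (Finset.notMem_erase c M)
      rw [Finset.insert_erase hc] at this
      exact ⟨_, this, .refl _⟩
  | str h₁ _ h₂ ih =>
      obtain ⟨Q, hs, he⟩ := ih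
      obtain ⟨Q', hs', he'⟩ := h₁.stepsLike.1 _ _ _ _ _ _ hs
      exact ⟨Q', hs', he'.trans (he.trans h₂)⟩
  | @parL M M' P P' Q k _ ih =>
      obtain ⟨Q'', hs, he⟩ := ih
      exact ⟨.par Q'' Q, .lParL hs, .parCong he (.refl Q)⟩
  | @parR M M' P Q Q' k _ ih =>
      obtain ⟨Q'', hs, he⟩ := ih
      exact ⟨.par P Q'', .lParR hs, .parCong (.refl P) he⟩

theorem Step.of_preStep (h : PreStep Γ S μ k Γ' S') : Step Γ S μ k Γ' S' :=
  ⟨1, FixesDom.one Γ, by rwa [System.rename_one]⟩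

theorem Step.exists_red_of_tau (h : Step Γ T .tau k Γ' T') (hT : T.proc.chans ⊆ T.res) :
    Γ' = Γ ∧ ∃ T₀ ρ, FixesDom Γ ρ ∧ Red T k T₀ ∧ T₀.rename ρ = T' := by
  obtain ⟨ρ, hρ, hpre⟩ := h
  have hchans : (T.rename ρ).proc.chans ⊆ (T.rename ρ).res := by
    simpa [System.rename, Proc.chans_rename] using Set.image_mono (f := ρ) hT
  refine ⟨hpre.env_eq_of_tau, T'.rename ⇑ρ⁻¹, ρ, hρ, ?_, by simp [System.rename_rename]⟩
  have := (hpre.red_of_tau hchans).rename ρ⁻¹.injective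
  rwa [System.rename_inv_rename] at this

-- A τ-step is a reduction only when its channel is allocated, as it is in configurations.
-- Configurations are not shown to be closed under τ-steps, so a τ-closed family `P` is used.
theorem Weak.exists_redStar_of_tau {P : System → Prop}
    (hP : ∀ {T k T'}, P T → Step Γ T .tau k Γ T' → P T')
    (hchans : ∀ {T}, P T → T.proc.chans ⊆ T.res)
    (h : Weak Γ T .tau k Γ' T') (hT : P T) :
    Γ' = Γ ∧ P T' ∧
      ∃ T₀ ρ, FixesDom Γ ρ ∧ RedStar T k T₀ ∧ T₀.rename ρ = T' := by
  generalize hμ : Act.tau = μ at h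
  induction h with
  | single hs =>
      subst hμ
      obtain ⟨rfl, T₀, ρ, hρ, hred, rfl⟩ := hs.exists_red_of_tau (hchans hT)
      exact ⟨rfl, hP hT hs, T₀, ρ, hρ, .single hred, rfl⟩
  | tauLeft hs _ ih =>
      obtain ⟨rfl, T₀, ρ, hρ, hred, rfl⟩ := hs.exists_red_of_tau (hchans hT)
      obtain ⟨rfl, hT', T₁, σ, hσ, hreds, rfl⟩ := ih hP (hP hT hs) hμ
      have := hreds.rename ρ⁻¹.injective
      rw [System.rename_inv_rename] at this
      exact ⟨rfl, hT', _, σ * ρ, hσ.mul hρ, RedStar.head hred this, by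
        rw [System.rename_rename, mul_inv_cancel_right]⟩
  | tauRight _ hs ih =>
      obtain ⟨rfl, hT₁, T₁, σ, hσ, hreds, rfl⟩ := ih hP hT hμ
      subst hμ
      obtain ⟨rfl, T₀, ρ, hρ, hred, rfl⟩ := hs.exists_red_of_tau (hchans hT₁)
      have := hred.rename σ⁻¹.injective
      rw [System.rename_inv_rename] at this
      exact ⟨rfl, hP hT₁ hs, _, ρ * σ, hρ.mul hσ, hreds.step this, by
        rw [System.rename_rename, mul_inv_cancel_right]⟩

/-! ### Systems up to invisible renaming and structural equivalence -/

def SysEquiv (Γ : TyEnv) (A B : System) : Prop :=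
  ∃ σ, FixesDom Γ σ ∧ A.res.image σ = B.res ∧ StructEq (A.proc.rename σ) B.proc

namespace SysEquiv

theorem of_structEq {A B : System} (hres : A.res = B.res) (hproc : StructEq A.proc B.proc) :
    SysEquiv Γ A B :=
  ⟨1, .one Γ, by simpa using hres, by simpa using hproc⟩

theorem of_rename_eq {A B : System} (hσ : FixesDom Γ σ) (h : A.rename σ = B) :
    SysEquiv Γ A B :=
  ⟨σ, hσ, congrArg System.res h, h ▸ .refl _⟩

theorem refl (Γ : TyEnv) (A : System) : SysEquiv Γ A A := of_structEq rfl (.refl _)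

theorem symm (h : SysEquiv Γ A B) : SysEquiv Γ B A := by
  obtain ⟨σ, hσ, hres, hproc⟩ := h
  refine ⟨σ⁻¹, hσ.inv, ?_, ?_⟩
  · rw [← hres, Finset.image_image, ← Equiv.Perm.coe_mul, inv_mul_cancel, Equiv.Perm.coe_one,
      Finset.image_id]
  · have := (hproc.rename ⇑σ⁻¹).symm
    rwa [Proc.rename_rename, ← Equiv.Perm.coe_mul, inv_mul_cancel, Equiv.Perm.coe_one,
      Proc.rename_id] at this

theorem isConfig (h : SysEquiv Γ A B) (hB : IsConfig Γ B) : IsConfig Γ A := by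
  obtain ⟨σ, hσ, hres, hproc⟩ := h.symm
  have := hB.rename hσ
  rw [System.rename, hres] at this
  exact this.of_structEq hproc

end SysEquiv

theorem Step.of_sysEquiv (he : SysEquiv Γ A B) (h : Step Γ B μ k Γ' B') :
    ∃ A', Step Γ A μ k Γ' A' ∧ SysEquiv Γ' A' B' := by
  obtain ⟨σ, hσ, hres, hproc⟩ := he
  obtain ⟨ρ, (hρ : FixesDom Γ ρ), hpre⟩ := h
  obtain ⟨R', hpre', hR'⟩ := (hproc.rename ρ).stepsLike.1 _ _ _ _ _ _ hpre
  refine ⟨⟨B'.res, R'⟩, ⟨ρ * σ, hρ.mul hσ, ?_⟩, .of_structEq rfl hR'⟩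
  rwa [← A.rename_rename, System.rename, System.rename, hres]

theorem Weak.of_sysEquiv (he : SysEquiv Γ A B) (h : Weak Γ B μ k Γ' B') :
    ∃ A', Weak Γ A μ k Γ' A' ∧ SysEquiv Γ' A' B' := by
  induction h generalizing A with
  | single hs =>
      obtain ⟨A', hs', he'⟩ := hs.of_sysEquiv he
      exact ⟨A', .single hs', he'⟩
  | tauLeft hs _ ih =>
      obtain ⟨A₁, hs', he₁⟩ := hs.of_sysEquiv he
      obtain ⟨A', hw, he'⟩ := ih he₁
      exact ⟨A', .tauLeft hs' hw, he'⟩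
  | tauRight _ hs ih =>
      obtain ⟨A₁, hw, he₁⟩ := ih he
      obtain ⟨A', hs', he'⟩ := hs.of_sysEquiv he₁
      exact ⟨A', .tauRight hw hs', he'⟩

theorem WeakHat.of_sysEquiv (he : SysEquiv Γ A B) (h : WeakHat Γ B μ k Γ' B') :
    ∃ A', WeakHat Γ A μ k Γ' A' ∧ SysEquiv Γ' A' B' := by
  rcases h with hw | ⟨rfl, rfl, rfl, rfl⟩
  · obtain ⟨A', hw', he'⟩ := hw.of_sysEquiv he
    exact ⟨A', .inl hw', he'⟩
  · exact ⟨A, .inr ⟨rfl, rfl, rfl, rfl⟩, he⟩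

def upToSysEquiv (R : ARel) : ARel := fun Γ n A B =>
  ∃ A₁ B₁, SysEquiv Γ A A₁ ∧ SysEquiv Γ B B₁ ∧ R Γ n A₁ B₁

theorem IsAmortisedBisim.upToSysEquiv (hR : IsAmortisedBisim R) :
    IsAmortisedBisim (upToSysEquiv R) := by
  refine ⟨fun Γ n A B ⟨A₁, B₁, hA, hB, h⟩ => ⟨hA.isConfig (hR.1 _ _ _ _ h).1,
    hB.isConfig (hR.1 _ _ _ _ h).2⟩, fun Γ n A B ⟨A₁, B₁, hA, hB, h⟩ => ⟨?_, ?_⟩⟩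
  · intro μ k Γ' A' hs
    obtain ⟨A₁', hs₁, hA'⟩ := hs.of_sysEquiv hA.symm
    obtain ⟨B₁', l, m, hw₁, hm, h'⟩ := (hR.2 _ _ _ _ h).1 _ _ _ _ hs₁
    obtain ⟨B', hw, hB'⟩ := hw₁.of_sysEquiv hB
    exact ⟨B', l, m, hw, hm, A₁', B₁', hA'.symm, hB', h'⟩
  · intro μ l Γ' B' hs
    obtain ⟨B₁', hs₁, hB'⟩ := hs.of_sysEquiv hB.symm
    obtain ⟨A₁', k, m, hw₁, hm, h'⟩ := (hR.2 _ _ _ _ h).2 _ _ _ _ hs₁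
    obtain ⟨A', hw, hA'⟩ := hw₁.of_sysEquiv hA
    exact ⟨A', k, m, hw, hm, A₁', B₁', hA', hB'.symm, h'⟩

theorem Bisim.of_sysEquiv (h : Bisim Γ n A₁ B₁) (hA : SysEquiv Γ A A₁)
    (hB : SysEquiv Γ B B₁) : Bisim Γ n A B :=
  let ⟨R, hR, h⟩ := h
  ⟨upToSysEquiv R, hR.upToSysEquiv, A₁, B₁, hA, hB, h⟩

theorem Red.exists_tau_step (Γ : TyEnv) (h : Red S k S') :
    ∃ S₁, Step Γ S .tau k Γ S₁ ∧ SysEquiv Γ S' S₁ := by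
  obtain ⟨Q, hpre, hQ⟩ := h.exists_preStep Γ
  exact ⟨_, .of_preStep hpre, .of_structEq rfl hQ.symm⟩

theorem IsAmortisedBisim.exists_redStar_of_weakHat (hR : IsAmortisedBisim R) (hST : R Γ n S T)
    (h : WeakHat Γ T .tau k Γ T') : ∃ T₀, RedStar T k T₀ ∧ SysEquiv Γ T₀ T' := by
  let P : System → Prop := fun T => ∃ n S, R Γ n S T
  have hP : ∀ {T k T'}, P T → Step Γ T .tau k Γ T' → P T' := fun ⟨_, _, h⟩ hs =>
    let ⟨S', _, m, _, _, h'⟩ := (hR.2 _ _ _ _ h).2 _ _ _ _ hs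
    ⟨m, S', h'⟩
  have hchans : ∀ {T}, P T → T.proc.chans ⊆ T.res := fun ⟨_, _, h⟩ =>
    (hR.1 _ _ _ _ h).2.chans_subset
  rcases h with hw | ⟨-, rfl, -, rfl⟩
  · obtain ⟨-, -, T₀, ρ, hρ, hreds, rfl⟩ :=
      hw.exists_redStar_of_tau hP hchans ⟨n, S, hST⟩
    exact ⟨T₀, hreds, .of_rename_eq hρ rfl⟩
  · exact ⟨_, .refl _, .refl Γ _⟩

/-- Amortised bisimilarity is cost improving. -/
theorem bisim_cost_improving (Γ : TyEnv) (n : ℕ) (S T S' : System) (l : ℤ)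
    (h : Bisim Γ n S T) (hred : Red S l S') :
    ∃ (T' : System) (k : ℤ) (m : ℕ),
      RedStar T k T' ∧ (m : ℤ) = (n : ℤ) + k - l ∧ Bisim Γ m S' T' := by
  obtain ⟨R, hR, hST⟩ := h
  obtain ⟨S₁, hstep, hS'⟩ := hred.exists_tau_step Γ
  obtain ⟨T₁, k, m, hweak, hm, h₁⟩ := (hR.2 Γ n S T hST).1 _ _ _ _ hstep
  obtain ⟨T', hreds, hT'⟩ := hR.exists_redStar_of_weakHat hST hweak
  exact ⟨T', k, m, hreds, hm, Bisim.of_sysEquiv ⟨R, hR, h₁⟩ hS' hT'⟩
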